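/- Let $I = [\tau, 0]$ with $\tau < 0$ and $1 < p < \infty$. Let $\mu$ be a finite Borel measure on $I$ and define $D\rho = \int_\tau^0 \rho(\sigma)\,\mu(d\sigma)$ for $\rho \in W^{1,p}(I)$. Then for every $\varepsilon > 0$ there exists $b(\varepsilon) \ge 0$ such that $|D\rho| \le \varepsilon\|\rho'\|_{L^p(I)} + b(\varepsilon)\|\rho\|_{L^p(I)}$ for all $\rho \in W^{1,p}(I)$. -/

import Mathlib

open MeasureTheory Set Filter Topology

/-!
On a subinterval of length `δ`, the minimum of `|ρ|` is at most `δ^(-1/p) ‖ρ‖_p`, and by the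
fundamental theorem of calculus and Hölder's inequality `ρ` oscillates there by at most
`δ^(1-1/p) ‖ρ'‖_p`. Hence `‖ρ‖_∞ ≤ δ^(-1/p) ‖ρ‖_p + δ^(1-1/p) ‖ρ'‖_p` and `|Dρ| ≤ μ(I) ‖ρ‖_∞`;
since `1 - 1/p > 0`, a small `δ` makes the coefficient of `‖ρ'‖_p` at most `ε`.
-/

noncomputable def lpNormOn (p : ℝ) (s : Set ℝ) (f : ℝ → ℝ) : ℝ :=
  (eLpNorm f (ENNReal.ofReal p) (volume.restrict s)).toReal

section

variable {ρ ρ' : ℝ → ℝ} {p a b : ℝ}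

theorem lpNormOn_nonneg (f : ℝ → ℝ) {s : Set ℝ} : 0 ≤ lpNormOn p s f :=
  ENNReal.toReal_nonneg

theorem lpNormOn_mono {f : ℝ → ℝ} {s t : Set ℝ} (hst : s ⊆ t)
    (hf : MemLp f (ENNReal.ofReal p) (volume.restrict t)) :
    lpNormOn p s f ≤ lpNormOn p t f :=
  ENNReal.toReal_mono hf.eLpNorm_ne_top
    (eLpNorm_mono_measure f (Measure.restrict_mono hst le_rfl))

theorem ContinuousOn.memLp_restrict_Icc (hρ : ContinuousOn ρ (Icc a b)) (q : ENNReal) :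
    MemLp ρ q (volume.restrict (Icc a b)) := by
  obtain ⟨C, hC⟩ := isCompact_Icc.exists_bound_of_continuousOn hρ
  exact MemLp.of_bound (hρ.aestronglyMeasurable measurableSet_Icc) C
    (ae_restrict_of_forall_mem measurableSet_Icc hC)

theorem abs_sub_le_lpNormOn_deriv_mul_rpow (hp : 1 ≤ p) (hab : a ≤ b)
    (hd : ∀ t ∈ Icc a b, HasDerivWithinAt ρ (ρ' t) (Icc a b) t)
    (hρ' : MemLp ρ' (ENNReal.ofReal p) (volume.restrict (Icc a b))) :
    |ρ b - ρ a| ≤ lpNormOn p (Icc a b) ρ' * (b - a) ^ (1 - 1 / p) := by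
  have hP : 1 ≤ ENNReal.ofReal p := ENNReal.one_le_ofReal.2 hp
  have hint : IntegrableOn ρ' (Icc a b) := hρ'.integrable hP
  have hftc : ∫ x in a..b, ρ' x = ρ b - ρ a := by
    refine intervalIntegral.integral_eq_sub_of_hasDeriv_right_of_le hab
      (fun t ht => (hd t ht).continuousWithinAt) (fun t ht => ?_)
      ((intervalIntegrable_iff_integrableOn_Icc_of_le hab).2 hint)
    exact (hd t (Ioo_subset_Icc_self ht)).mono_of_mem_nhdsWithin
      (Icc_mem_nhdsGT_of_mem ⟨ht.1.le, ht.2⟩)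
  have hexp : 0 ≤ 1 - 1 / p := sub_nonneg.2 (div_le_one_of_le₀ hp (by linarith))
  have hholder := eLpNorm_le_eLpNorm_mul_rpow_measure_univ hP hρ'.1
  rw [Measure.restrict_apply_univ, Real.volume_Icc, ENNReal.toReal_one,
    ENNReal.toReal_ofReal (by linarith), div_one] at hholder
  calc |ρ b - ρ a| = ‖∫ x in Icc a b, ρ' x‖ := by
        rw [← hftc, intervalIntegral.integral_of_le hab, integral_Icc_eq_integral_Ioc,
          Real.norm_eq_abs]
    _ ≤ (eLpNorm ρ' 1 (volume.restrict (Icc a b))).toReal := by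
        rw [eLpNorm_one_eq_lintegral_enorm]
        exact (norm_integral_le_integral_norm ρ').trans_eq (integral_norm_eq_lintegral_enorm hρ'.1)
    _ ≤ (eLpNorm ρ' (ENNReal.ofReal p) (volume.restrict (Icc a b)) *
          ENNReal.ofReal (b - a) ^ (1 - 1 / p)).toReal :=
        ENNReal.toReal_mono (ENNReal.mul_ne_top hρ'.eLpNorm_ne_top
          (ENNReal.rpow_ne_top_of_nonneg hexp ENNReal.ofReal_ne_top)) hholder
    _ = lpNormOn p (Icc a b) ρ' * (b - a) ^ (1 - 1 / p) := by
        rw [ENNReal.toReal_mul, ← ENNReal.toReal_rpow, ENNReal.toReal_ofReal (by linarith)]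
        rfl

theorem abs_sub_le_lpNormOn_deriv_mul_abs_sub_rpow (hp : 1 ≤ p)
    (hd : ∀ t ∈ Icc a b, HasDerivWithinAt ρ (ρ' t) (Icc a b) t)
    (hρ' : MemLp ρ' (ENNReal.ofReal p) (volume.restrict (Icc a b)))
    {u v : ℝ} (hu : u ∈ Icc a b) (hv : v ∈ Icc a b) :
    |ρ v - ρ u| ≤ lpNormOn p (Icc a b) ρ' * |v - u| ^ (1 - 1 / p) := by
  wlog huv : u ≤ v generalizing u v
  · rw [abs_sub_comm, abs_sub_comm v]
    exact this hv hu (le_of_not_ge huv)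
  have hsub : Icc u v ⊆ Icc a b := Icc_subset_Icc hu.1 hv.2
  calc |ρ v - ρ u| ≤ lpNormOn p (Icc u v) ρ' * (v - u) ^ (1 - 1 / p) :=
        abs_sub_le_lpNormOn_deriv_mul_rpow hp huv (fun t ht => (hd t (hsub ht)).mono hsub)
          (hρ'.mono_measure (Measure.restrict_mono hsub le_rfl))
    _ ≤ lpNormOn p (Icc a b) ρ' * |v - u| ^ (1 - 1 / p) := by
        rw [abs_of_nonneg (sub_nonneg.2 huv)]
        exact mul_le_mul_of_nonneg_right (lpNormOn_mono hsub hρ')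
          (Real.rpow_nonneg (sub_nonneg.2 huv) _)

theorem exists_abs_mul_rpow_le_lpNormOn (hp : 0 < p) (hab : a < b)
    (hρ : ContinuousOn ρ (Icc a b)) :
    ∃ s ∈ Icc a b, |ρ s| * (b - a) ^ (1 / p) ≤ lpNormOn p (Icc a b) ρ := by
  obtain ⟨s, hs, hmin⟩ := isCompact_Icc.exists_isMinOn (nonempty_Icc.2 hab.le) hρ.abs
  refine ⟨s, hs, ?_⟩
  have hconst : eLpNorm (fun _ => ρ s) (ENNReal.ofReal p) (volume.restrict (Icc a b))
      ≤ eLpNorm ρ (ENNReal.ofReal p) (volume.restrict (Icc a b)) :=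
    eLpNorm_mono_ae (ae_restrict_of_forall_mem measurableSet_Icc fun x hx => by
      simpa using hmin hx)
  have hvol : volume.restrict (Icc a b) ≠ 0 := by
    simp [Measure.restrict_eq_zero, hab]
  rw [eLpNorm_const _ (by simpa using hp) hvol, Measure.restrict_apply_univ, Real.volume_Icc,
    ENNReal.toReal_ofReal hp.le] at hconst
  have := ENNReal.toReal_mono (hρ.memLp_restrict_Icc _).eLpNorm_ne_top hconst
  rwa [ENNReal.toReal_mul, ← ENNReal.toReal_rpow, ENNReal.toReal_ofReal (by linarith),
    toReal_enorm, Real.norm_eq_abs] at this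

theorem abs_le_lpNormOn_div_add_lpNormOn_deriv_mul (hp : 1 ≤ p)
    (hd : ∀ t ∈ Icc a b, HasDerivWithinAt ρ (ρ' t) (Icc a b) t)
    (hρ' : MemLp ρ' (ENNReal.ofReal p) (volume.restrict (Icc a b)))
    {δ : ℝ} (hδ : 0 < δ) (hδab : δ ≤ b - a) {t : ℝ} (ht : t ∈ Icc a b) :
    |ρ t| ≤ lpNormOn p (Icc a b) ρ / δ ^ (1 / p) + lpNormOn p (Icc a b) ρ' * δ ^ (1 - 1 / p) := by
  have hρ : ContinuousOn ρ (Icc a b) := fun x hx => (hd x hx).continuousWithinAt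
  set c := min t (b - δ)
  have hJ : Icc c (c + δ) ⊆ Icc a b :=
    Icc_subset_Icc (le_min ht.1 (by linarith)) (by linarith [min_le_right t (b - δ)])
  have htJ : t ∈ Icc c (c + δ) := by
    refine ⟨min_le_left _ _, ?_⟩
    rcases min_choice t (b - δ) with h | h <;> simp only [c, h] <;> linarith [ht.2]
  obtain ⟨s, hsJ, hs⟩ :=
    exists_abs_mul_rpow_le_lpNormOn (by linarith : 0 < p) (by linarith : c < c + δ) (hρ.mono hJ)
  rw [add_sub_cancel_left] at hs
  have hsB : |ρ s| ≤ lpNormOn p (Icc a b) ρ / δ ^ (1 / p) := by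
    rw [le_div_iff₀ (Real.rpow_pos_of_pos hδ _)]
    exact hs.trans (lpNormOn_mono hJ (hρ.memLp_restrict_Icc _))
  have hts : |ρ t - ρ s| ≤ lpNormOn p (Icc a b) ρ' * δ ^ (1 - 1 / p) := by
    refine (abs_sub_le_lpNormOn_deriv_mul_abs_sub_rpow hp hd hρ' (hJ hsJ) ht).trans ?_
    refine mul_le_mul_of_nonneg_left ?_ (lpNormOn_nonneg _)
    refine Real.rpow_le_rpow (abs_nonneg _) ?_ (sub_nonneg.2 (div_le_one_of_le₀ hp (by linarith)))
    rw [abs_le]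
    constructor <;> linarith [hsJ.1, hsJ.2, htJ.1, htJ.2]
  linarith [abs_sub_abs_le_abs_sub (ρ t) (ρ s)]

end

theorem exists_pos_le_and_mul_rpow_le (c : ℝ) {q ε L : ℝ} (hq : 0 < q) (hε : 0 < ε)
    (hL : 0 < L) : ∃ δ, 0 < δ ∧ δ ≤ L ∧ c * δ ^ q ≤ ε := by
  have hlim : Tendsto (fun δ : ℝ => c * δ ^ q) (𝓝[>] 0) (𝓝 0) := by
    have hcont : Continuous fun δ : ℝ => c * δ ^ q :=
      continuous_const.mul (Real.continuous_rpow_const hq.le)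
    simpa [Real.zero_rpow hq.ne'] using (hcont.tendsto 0).mono_left nhdsWithin_le_nhds
  obtain ⟨δ, hδ, hδ0, hδL⟩ :=
    ((hlim.eventually (ge_mem_nhds hε)).and (Ioc_mem_nhdsGT hL)).exists
  exact ⟨δ, hδ0, hδL, hδ⟩

/-- Relative boundedness of the delay operator with relative bound `0`:
for a finite Borel measure `μ` on `I = [τ,0]` and `Dρ = ∫_τ^0 ρ dμ`, for every
`ε > 0` there is `b(ε) ≥ 0` with `|Dρ| ≤ ε ‖ρ'‖_{L^p(I)} + b(ε) ‖ρ‖_{L^p(I)}`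
for all `ρ ∈ W^{1,p}(I)`. -/
theorem delay_operator_relatively_bounded
    (τ : ℝ) (hτ : τ < 0) (p : ℝ) (hp : 1 < p)
    (μ : Measure ℝ) [IsFiniteMeasure μ] (hμ : μ (Icc τ 0)ᶜ = 0) :
    ∀ ε > (0 : ℝ), ∃ b : ℝ, 0 ≤ b ∧
      ∀ ρ ρ' : ℝ → ℝ,
        (∀ t ∈ Icc τ 0, HasDerivWithinAt ρ (ρ' t) (Icc τ 0) t) →
        MemLp ρ' (ENNReal.ofReal p) (volume.restrict (Icc τ 0)) →
        |∫ σ, ρ σ ∂μ| ≤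
          ε * (eLpNorm ρ' (ENNReal.ofReal p) (volume.restrict (Icc τ 0))).toReal
            + b * (eLpNorm ρ (ENNReal.ofReal p) (volume.restrict (Icc τ 0))).toReal := by
  intro ε hε
  obtain ⟨δ, hδ, hδτ, hδε⟩ := exists_pos_le_and_mul_rpow_le (μ.real univ)
    (sub_pos.2 ((div_lt_one (by linarith)).2 hp)) hε (by linarith : 0 < 0 - τ)
  refine ⟨μ.real univ / δ ^ (1 / p), by positivity, fun ρ ρ' hd hρ' => ?_⟩
  have hsup : ∀ᵐ σ ∂μ, ‖ρ σ‖ ≤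
      lpNormOn p (Icc τ 0) ρ / δ ^ (1 / p) + lpNormOn p (Icc τ 0) ρ' * δ ^ (1 - 1 / p) :=
    (show ∀ᵐ σ ∂μ, σ ∈ Icc τ 0 from mem_ae_iff.2 hμ).mono fun σ hσ =>
      abs_le_lpNormOn_div_add_lpNormOn_deriv_mul hp.le hd hρ' hδ hδτ hσ
  calc |∫ σ, ρ σ ∂μ| ≤ (lpNormOn p (Icc τ 0) ρ / δ ^ (1 / p)
        + lpNormOn p (Icc τ 0) ρ' * δ ^ (1 - 1 / p)) * μ.real univ :=
        norm_integral_le_of_norm_le_const hsup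
    _ = μ.real univ * δ ^ (1 - 1 / p) * lpNormOn p (Icc τ 0) ρ'
        + μ.real univ / δ ^ (1 / p) * lpNormOn p (Icc τ 0) ρ := by ring
    _ ≤ ε * lpNormOn p (Icc τ 0) ρ' + μ.real univ / δ ^ (1 / p) * lpNormOn p (Icc τ 0) ρ := by
        gcongr
        exact lpNormOn_nonneg _
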